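/- For any operators A, B on an n-dimensional complex Hilbert space, the integral over the projective space (with the unique U(n)-invariant probability measure μₙ) of conj(F_A)·F_B equals (tr(A*B) + tr(A*)tr(B)) / (n(n+1)), where F_A(p) = tr(pA). -/

import Mathlib

open Matrix MeasureTheory
open scoped ComplexOrder
noncomputable section

/-- The projective space of `ℂⁿ`, identified with the set of rank-one orthogonal projections
(positive semidefinite idempotents of unit trace). -/
def ProjSp (n : ℕ) : Type :=
  {p : Matrix (Fin n) (Fin n) ℂ // p.PosSemidef ∧ p * p = p ∧ p.trace = 1}

instance (n : ℕ) : MeasurableSpace (Matrix (Fin n) (Fin n) ℂ) :=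
  (inferInstance : MeasurableSpace (Fin n → Fin n → ℂ))

instance (n : ℕ) : MeasurableSpace (ProjSp n) :=
  (inferInstance : MeasurableSpace
    {p : Matrix (Fin n) (Fin n) ℂ // p.PosSemidef ∧ p * p = p ∧ p.trace = 1})

/-- The action `p ↦ U p U⁻¹ = U p U*` of the unitary group `U(n)` on the projective space. -/
def projConj {n : ℕ} (U : Matrix.unitaryGroup (Fin n) ℂ) (p : ProjSp n) : ProjSp n :=
  ⟨(U : Matrix (Fin n) (Fin n) ℂ) * p.1 * star (U : Matrix (Fin n) (Fin n) ℂ), by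
    obtain ⟨hpos, hidem, htr⟩ := p.2
    have hU : star (U : Matrix (Fin n) (Fin n) ℂ) * (U : Matrix (Fin n) (Fin n) ℂ) = 1 :=
      Unitary.star_mul_self_of_mem U.2
    refine ⟨?_, ?_, ?_⟩
    · simpa [Matrix.star_eq_conjTranspose] using
        hpos.mul_mul_conjTranspose_same (U : Matrix (Fin n) (Fin n) ℂ)
    · calc (U * p.1 * star (U : Matrix (Fin n) (Fin n) ℂ)) *
            ((U : Matrix (Fin n) (Fin n) ℂ) * p.1 * star (U : Matrix (Fin n) (Fin n) ℂ))
          = (U : Matrix (Fin n) (Fin n) ℂ) * p.1 *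
              (star (U : Matrix (Fin n) (Fin n) ℂ) * (U : Matrix (Fin n) (Fin n) ℂ)) *
              p.1 * star (U : Matrix (Fin n) (Fin n) ℂ) := by
            simp only [Matrix.mul_assoc]
      _ = (U : Matrix (Fin n) (Fin n) ℂ) * p.1 * star (U : Matrix (Fin n) (Fin n) ℂ) := by
            rw [hU]; simp only [Matrix.mul_one, Matrix.mul_assoc, hidem]
    · rw [Matrix.trace_mul_cycle, hU, Matrix.one_mul, htr]⟩


/-!
`Q(X, Y) = ∫ tr(pX) tr(pY) dμ` is a bilinear form with `Q(U*XU, U*YU) = Q(X, Y)` for every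
unitary `U`, and the theorem is `Q(A*, B)` because `conj tr(pA) = tr(pA*)`. On matrix units,
diagonal unitaries kill `Q(Eᵢⱼ, Eₖₗ)` unless `{i, k} = {j, l}`, and permutation matrices make the
remaining values depend only on the equality pattern: `α = Q(Eᵢᵢ, Eᵢᵢ)`, `β = Q(Eᵢᵢ, Eₖₖ)`,
`γ = Q(Eᵢₖ, Eₖᵢ)`. The identities `tr(p)² = 1` and `tr(p²) = 1` give
`nα + n(n-1)β = 1 = nα + n(n-1)γ`, and invariance under a unitary mixing two coordinates gives
`α = β + γ`. Hence `β = γ = 1/(n(n+1))` and `α = 2β`, which are the values of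
`(tr(XY) + tr X tr Y)/(n(n+1))` on matrix units.
-/

lemma Equiv.Perm.exists_apply_eq_and_apply_eq {α : Type*} [DecidableEq α] {a b a' b' : α}
    (hab : a ≠ b) (hab' : a' ≠ b') : ∃ σ : Equiv.Perm α, σ a = a' ∧ σ b = b' := by
  set c := Equiv.swap a a' b
  have hc : a' ≠ c := by
    simpa [c, Equiv.swap_apply_self] using (Equiv.swap a a').injective.ne hab
  refine ⟨Equiv.swap c b' * Equiv.swap a a', ?_, ?_⟩
  · simp [Equiv.swap_apply_of_ne_of_ne hc hab']
  · simp [c]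

lemma Fintype.sum_sum_ite_eq {ι R : Type*} [Fintype ι] [DecidableEq ι] [CommRing R] (a b : R) :
    ∑ i : ι, ∑ k : ι, (if i = k then a else b) = card ι * (a + (card ι - 1) * b) := by
  have h (i k : ι) : (if i = k then a else b) = b + if i = k then a - b else 0 := by
    split_ifs <;> ring
  simp only [h, Finset.sum_add_distrib, Finset.sum_ite_eq, Finset.mem_univ, if_true,
    Finset.sum_const, Finset.card_univ, nsmul_eq_mul]
  ring

namespace Matrix

variable {ι R : Type*} [Fintype ι] [DecidableEq ι]

section NonAssocSemiring

variable [NonAssocSemiring R]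

lemma permMatrix_mul_single (σ : Equiv.Perm ι) (i j : ι) (c : R) :
    σ.permMatrix R * single i j c = single (σ.symm i) j c := by
  rw [PEquiv.toMatrix_toPEquiv_mul]
  exact submatrix_single_equiv σ (Equiv.refl ι) i j c

lemma single_mul_permMatrix (σ : Equiv.Perm ι) (i j : ι) (c : R) :
    single i j c * σ.permMatrix R = single i (σ j) c := by
  rw [PEquiv.mul_toMatrix_toPEquiv]
  exact submatrix_single_equiv (Equiv.refl ι) σ.symm i j c

end NonAssocSemiring

section CommRing

variable [CommRing R] [StarRing R]

lemma diagonal_mem_unitaryGroup {d : ι → R} (hd : ∀ x, star (d x) * d x = 1) :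
    diagonal d ∈ unitaryGroup ι R := by
  rw [mem_unitaryGroup_iff', star_eq_conjTranspose, diagonal_conjTranspose,
    diagonal_mul_diagonal, ← diagonal_one]
  exact congrArg diagonal (funext hd)

lemma star_diagonal_mul_single_mul_diagonal (d : ι → R) (i j : ι) (c : R) :
    star (diagonal d) * single i j c * diagonal d = single i j (star (d i) * c * d j) := by
  ext a b
  simp only [star_eq_conjTranspose, diagonal_conjTranspose, diagonal_mul, mul_diagonal,
    single_apply, Pi.star_apply]
  split_ifs with h
  · rw [h.1, h.2]
  · simp

lemma permMatrix_mem_unitaryGroup (σ : Equiv.Perm ι) : σ.permMatrix R ∈ unitaryGroup ι R := by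
  rw [mem_unitaryGroup_iff, star_eq_conjTranspose, conjTranspose_permMatrix, ← permMatrix_mul,
    inv_mul_cancel, permMatrix_one]

lemma star_permMatrix_mul_single_mul_permMatrix (σ : Equiv.Perm ι) (i j : ι) (c : R) :
    star (σ.permMatrix R) * single i j c * σ.permMatrix R = single (σ i) (σ j) c := by
  rw [star_eq_conjTranspose, conjTranspose_permMatrix, permMatrix_mul_single,
    single_mul_permMatrix]
  rfl

omit [Fintype ι] in
lemma star_swap_permMatrix (u v : ι) :
    star ((Equiv.swap u v).permMatrix R) = (Equiv.swap u v).permMatrix R := by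
  rw [star_eq_conjTranspose, conjTranspose_permMatrix, Equiv.swap_inv]

end CommRing

/-- `(3 + 4i S) / 5` for the transposition matrix `S` of `u` and `v`: unitary because `S` is a
self-adjoint involution; the Pythagorean triple avoids square roots. -/
def swapRotation (u v : ι) : Matrix ι ι ℂ :=
  (3 / 5 : ℂ) • 1 + (4 / 5 * Complex.I) • (Equiv.swap u v).permMatrix ℂ

lemma swapRotation_mem_unitaryGroup (u v : ι) : swapRotation u v ∈ unitaryGroup ι ℂ := by
  have hS : (Equiv.swap u v).permMatrix ℂ * (Equiv.swap u v).permMatrix ℂ = 1 := by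
    rw [← permMatrix_mul, Equiv.swap_mul_self, permMatrix_one]
  rw [mem_unitaryGroup_iff, swapRotation]
  simp only [star_add, star_smul, star_swap_permMatrix, star_one, Matrix.mul_add, Matrix.add_mul,
    Matrix.smul_mul, Matrix.mul_smul, Matrix.one_mul, Matrix.mul_one, hS, star_div₀, star_ofNat,
    smul_add, star_mul', RCLike.star_def, Complex.conj_I, mul_neg, neg_smul]
  match_scalars <;> simp [Complex.ext_iff] <;> norm_num

lemma star_swapRotation_mul_single_mul_swapRotation (u v : ι) :
    star (swapRotation u v) * single u u 1 * swapRotation u v =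
      (9 / 25 : ℂ) • single u u 1 + (12 / 25 * Complex.I) • single u v 1
        - (12 / 25 * Complex.I) • single v u 1 + (16 / 25 : ℂ) • single v v 1 := by
  simp only [swapRotation, star_add, star_smul, star_swap_permMatrix, star_one, Matrix.mul_add,
    Matrix.add_mul, Matrix.smul_mul, Matrix.mul_smul, Matrix.one_mul, Matrix.mul_one,
    permMatrix_mul_single, single_mul_permMatrix, Equiv.symm_swap,
    Equiv.swap_apply_left]
  match_scalars <;> simp [Complex.ext_iff] <;> norm_num

end Matrix

instance {n : ℕ} : BorelSpace (Matrix (Fin n) (Fin n) ℂ) :=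
  inferInstanceAs (BorelSpace (Fin n → Fin n → ℂ))

namespace ProjSp

variable {n : ℕ}

lemma trace_eq_one (p : ProjSp n) : p.1.trace = 1 := p.2.2.2

lemma mul_self (p : ProjSp n) : p.1 * p.1 = p.1 := p.2.2.1

lemma conjTranspose_eq (p : ProjSp n) : p.1ᴴ = p.1 := p.2.1.1

lemma conj_trace_mul (p : ProjSp n) (A : Matrix (Fin n) (Fin n) ℂ) :
    starRingEnd ℂ (p.1 * A).trace = (p.1 * Aᴴ).trace :=
  calc starRingEnd ℂ (p.1 * A).trace = ((p.1 * A)ᴴ).trace := (trace_conjTranspose _).symm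
    _ = (p.1 * Aᴴ).trace := by rw [conjTranspose_mul, conjTranspose_eq, trace_mul_comm]

lemma norm_sq_apply_le_diag (p : ProjSp n) (i j : Fin n) :
    ((‖p.1 i j‖ ^ 2 : ℝ) : ℂ) ≤ p.1 j j := by
  have hjj : p.1 j j = ∑ k, ((‖p.1 k j‖ ^ 2 : ℝ) : ℂ) := by
    conv_lhs => rw [← mul_self p]
    nth_rw 1 [← conjTranspose_eq p]
    simp [Matrix.mul_apply, Complex.conj_mul']
  rw [hjj]
  exact Finset.single_le_sum (f := fun k => ((‖p.1 k j‖ ^ 2 : ℝ) : ℂ))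
    (fun k _ => by positivity) (Finset.mem_univ i)

lemma diag_le_one (p : ProjSp n) (j : Fin n) : p.1 j j ≤ 1 :=
  (Finset.single_le_sum (f := fun k => p.1 k k) (fun _ _ => p.2.1.diag_nonneg)
    (Finset.mem_univ j)).trans_eq (trace_eq_one p)

lemma norm_apply_le_one (p : ProjSp n) (i j : Fin n) : ‖p.1 i j‖ ≤ 1 := by
  have h : ((‖p.1 i j‖ ^ 2 : ℝ) : ℂ) ≤ 1 :=
    (norm_sq_apply_le_diag p i j).trans (diag_le_one p j)
  have h' : ‖p.1 i j‖ ^ 2 ≤ 1 := by exact_mod_cast h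
  nlinarith [norm_nonneg (p.1 i j)]

lemma norm_trace_mul_le (p : ProjSp n) (X : Matrix (Fin n) (Fin n) ℂ) :
    ‖(p.1 * X).trace‖ ≤ ∑ i, ∑ j, ‖X j i‖ := by
  simp only [Matrix.trace, Matrix.diag, Matrix.mul_apply]
  refine (norm_sum_le _ _).trans (Finset.sum_le_sum fun i _ => ?_)
  refine (norm_sum_le _ _).trans (Finset.sum_le_sum fun j _ => ?_)
  rw [norm_mul]
  exact mul_le_of_le_one_left (norm_nonneg _) (norm_apply_le_one p i j)

lemma measurable_trace_mul (X : Matrix (Fin n) (Fin n) ℂ) :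
    Measurable (fun p : ProjSp n => (p.1 * X).trace) :=
  (continuous_id.matrix_mul continuous_const).matrix_trace.measurable.comp measurable_subtype_coe

lemma measurable_projConj (U : Matrix.unitaryGroup (Fin n) ℂ) : Measurable (projConj U) :=
  ((continuous_const.mul continuous_id).mul continuous_const).measurable.comp measurable_subtype_coe
    |>.subtype_mk

variable {μ : Measure (ProjSp n)}

lemma integrable_trace_mul_trace [IsFiniteMeasure μ] (X Y : Matrix (Fin n) (Fin n) ℂ) :
    Integrable (fun p : ProjSp n => (p.1 * X).trace * (p.1 * Y).trace) μ := by
  refine .of_bound ((measurable_trace_mul X).mul (measurable_trace_mul Y)).aestronglyMeasurable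
    ((∑ i, ∑ j, ‖X j i‖) * ∑ i, ∑ j, ‖Y j i‖) (.of_forall fun p => ?_)
  rw [norm_mul]
  exact mul_le_mul (norm_trace_mul_le p X) (norm_trace_mul_le p Y) (norm_nonneg _)
    (by positivity)

variable (μ) in
def secondMoment [IsFiniteMeasure μ] :
    Matrix (Fin n) (Fin n) ℂ →ₗ[ℂ] Matrix (Fin n) (Fin n) ℂ →ₗ[ℂ] ℂ :=
  LinearMap.mk₂ ℂ (fun X Y => ∫ p, (p.1 * X).trace * (p.1 * Y).trace ∂μ)
    (fun X X' Y => by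
      simp only [Matrix.mul_add, Matrix.trace_add, add_mul]
      exact integral_add (integrable_trace_mul_trace X Y) (integrable_trace_mul_trace X' Y))
    (fun c X Y => by
      simp only [Matrix.mul_smul, Matrix.trace_smul, smul_eq_mul, mul_assoc]
      exact integral_const_mul c _)
    (fun X Y Y' => by
      simp only [Matrix.trace_add, mul_add]
      exact integral_add (integrable_trace_mul_trace X Y) (integrable_trace_mul_trace X Y'))
    (fun c X Y => by
      simp only [Matrix.mul_smul, Matrix.trace_smul, smul_eq_mul, mul_left_comm _ c]
      exact integral_const_mul c _)

def UnitarilyInvariant (μ : Measure (ProjSp n)) : Prop :=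
  ∀ U : Matrix.unitaryGroup (Fin n) ℂ, Measure.map (projConj U) μ = μ

section FiniteMeasure

variable [IsFiniteMeasure μ]

lemma secondMoment_apply (X Y : Matrix (Fin n) (Fin n) ℂ) :
    secondMoment μ X Y = ∫ p, (p.1 * X).trace * (p.1 * Y).trace ∂μ := rfl

lemma secondMoment_comm (X Y : Matrix (Fin n) (Fin n) ℂ) :
    secondMoment μ X Y = secondMoment μ Y X := by
  simp only [secondMoment_apply, mul_comm]

lemma secondMoment_conj (hμ : UnitarilyInvariant μ) (U : Matrix.unitaryGroup (Fin n) ℂ)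
    (X Y : Matrix (Fin n) (Fin n) ℂ) :
    secondMoment μ (star U.1 * X * U) (star U.1 * Y * U) = secondMoment μ X Y := by
  have h (p : ProjSp n) (Z : Matrix (Fin n) (Fin n) ℂ) :
      (p.1 * (star U.1 * Z * U)).trace = ((projConj U p).1 * Z).trace := by
    rw [← Matrix.mul_assoc, ← Matrix.mul_assoc, Matrix.trace_mul_cycle, ← Matrix.mul_assoc]
    rfl
  simp only [secondMoment_apply, h]
  conv_rhs => rw [← hμ U]
  exact (integral_map (measurable_projConj U).aemeasurable
    ((measurable_trace_mul X).mul (measurable_trace_mul Y)).aestronglyMeasurable).symm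

lemma secondMoment_single_eq_mul_of_diagonal (hμ : UnitarilyInvariant μ) {d : Fin n → ℂ}
    (hd : ∀ x, star (d x) * d x = 1) (i j k l : Fin n) :
    secondMoment μ (single i j 1) (single k l 1) =
      star (d i) * d j * (star (d k) * d l) * secondMoment μ (single i j 1) (single k l 1) := by
  have h := secondMoment_conj hμ ⟨diagonal d, diagonal_mem_unitaryGroup hd⟩
    (single i j 1) (single k l 1)
  have hsingle (a b : Fin n) (c : ℂ) : single a b c = c • single a b 1 := by
    rw [smul_single, smul_eq_mul, mul_one]
  simp only [star_diagonal_mul_single_mul_diagonal, mul_one] at h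
  rw [hsingle i j, hsingle k l] at h
  simp only [map_smul, LinearMap.smul_apply, smul_eq_mul] at h
  linear_combination -h

lemma secondMoment_single_eq_zero (hμ : UnitarilyInvariant μ) {i j k l : Fin n}
    (h : ¬((i = j ∧ k = l) ∨ (j = k ∧ l = i))) :
    secondMoment μ (single i j 1) (single k l 1) = 0 := by
  let phase (m : Fin n) : Fin n → ℂ := fun x => if x = m then Complex.I else 1
  have hphase (m x : Fin n) : star (phase m x) * phase m x = 1 := by
    by_cases hx : x = m <;> simp [phase, hx]
  have key (m : Fin n) (hm : star (phase m i) * phase m j * (star (phase m k) * phase m l) ≠ 1) :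
      secondMoment μ (single i j 1) (single k l 1) = 0 := by
    by_contra hne
    exact hm ((mul_eq_right₀ hne).1
      (secondMoment_single_eq_mul_of_diagonal hμ (hphase m) i j k l).symm)
  by_cases hij : i = j
  · refine key l ?_
    have hkl : k ≠ l := fun hkl => h (.inl ⟨hij, hkl⟩)
    subst hij
    by_cases hil : i = l <;> simp [phase, hkl, hil, Complex.ext_iff]
  · by_cases hjk : j = k
    · refine key i ?_
      have hli : l ≠ i := fun hli => h (.inr ⟨hjk, hli⟩)
      subst hjk
      simp [phase, hli, Ne.symm hij, Complex.ext_iff]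
    · refine key j ?_
      by_cases hlj : l = j <;> norm_num [phase, hij, hjk, Ne.symm hjk, hlj, Complex.ext_iff]

lemma secondMoment_single_perm (hμ : UnitarilyInvariant μ) (σ : Equiv.Perm (Fin n))
    (i j k l : Fin n) :
    secondMoment μ (single (σ i) (σ j) 1) (single (σ k) (σ l) 1) =
      secondMoment μ (single i j 1) (single k l 1) := by
  simpa only [star_permMatrix_mul_single_mul_permMatrix] using
    secondMoment_conj hμ ⟨_, permMatrix_mem_unitaryGroup σ⟩ (single i j 1) (single k l 1)

lemma secondMoment_single_diag_eq_add (hμ : UnitarilyInvariant μ) {u v : Fin n} (huv : u ≠ v) :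
    secondMoment μ (single u u 1) (single u u 1) =
      secondMoment μ (single u u 1) (single v v 1) +
        secondMoment μ (single u v 1) (single v u 1) := by
  have h := secondMoment_conj hμ ⟨_, swapRotation_mem_unitaryGroup u v⟩
    (single u u 1) (single u u 1)
  have hvv : secondMoment μ (single v v 1) (single v v 1) =
      secondMoment μ (single u u 1) (single u u 1) := by
    simpa using secondMoment_single_perm hμ (Equiv.swap u v) u u u u
  simp only [star_swapRotation_mul_single_mul_swapRotation, map_add, map_sub, map_smul,
    LinearMap.add_apply, LinearMap.sub_apply, LinearMap.smul_apply, smul_eq_mul] at h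
  simp only [secondMoment_single_eq_zero hμ, huv, Ne.symm huv, hvv,
    secondMoment_comm (single v v 1), secondMoment_comm (single v u 1), and_true, and_false,
    and_self, or_self, not_false_eq_true, mul_zero, add_zero, zero_add, sub_zero, zero_sub,
    mul_neg] at h
  -- `h` now reads `(337 α + 288 β + 288 γ) / 625 = α`, up to `I ^ 2 = -1`
  linear_combination (-625 / 288) * h
    - secondMoment μ (single u v 1) (single v u 1) * Complex.I_sq

end FiniteMeasure

lemma sum_sum_trace_mul_single (p : ProjSp n) :
    ∑ i, ∑ j, (p.1 * single i j (1 : ℂ)).trace * (p.1 * single j i (1 : ℂ)).trace = 1 := by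
  trans (p.1 * p.1).trace
  · simp only [trace_mul_single, MulOpposite.op_one, one_smul]
    simp only [Matrix.trace, Matrix.diag, Matrix.mul_apply]
    rw [Finset.sum_comm]
  · rw [mul_self, trace_eq_one]

variable [IsProbabilityMeasure μ]

lemma secondMoment_one_one : secondMoment μ 1 1 = 1 := by
  simp [secondMoment_apply, trace_eq_one]

lemma sum_sum_secondMoment_single_diag :
    ∑ i, ∑ k, secondMoment μ (single i i 1) (single k k 1) = 1 := by
  have h : ∑ i : Fin n, single i i (1 : ℂ) = 1 := by
    rw [sum_single_eq_diagonal (fun _ => (1 : ℂ)), diagonal_one]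
  simp only [← map_sum, ← LinearMap.sum_apply, h, secondMoment_one_one]

lemma sum_sum_secondMoment_single_swap :
    ∑ i, ∑ j, secondMoment μ (single i j 1) (single j i 1) = 1 := by
  simp only [secondMoment_apply]
  simp only [← integral_finsetSum _ fun _ _ => integrable_trace_mul_trace _ _]
  rw [← integral_finsetSum _ fun _ _ => integrable_finsetSum _ fun _ _ =>
    integrable_trace_mul_trace _ _]
  simp [sum_sum_trace_mul_single]

lemma secondMoment_single_of_ne (hμ : UnitarilyInvariant μ) {u v : Fin n} (huv : u ≠ v) :
    secondMoment μ (single u u 1) (single v v 1) = 1 / (n * (n + 1)) ∧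
      secondMoment μ (single u v 1) (single v u 1) = 1 / (n * (n + 1)) ∧
      secondMoment μ (single u u 1) (single u u 1) = 2 / (n * (n + 1)) := by
  set α := secondMoment μ (single u u 1) (single u u 1)
  set β := secondMoment μ (single u u 1) (single v v 1)
  set γ := secondMoment μ (single u v 1) (single v u 1)
  have hdiag (i k : Fin n) :
      secondMoment μ (single i i 1) (single k k 1) = if i = k then α else β := by
    split_ifs with hik
    · subst hik
      simpa using secondMoment_single_perm hμ (Equiv.swap u i) u u u u
    · obtain ⟨σ, rfl, rfl⟩ := Equiv.Perm.exists_apply_eq_and_apply_eq huv hik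
      exact secondMoment_single_perm hμ σ u u v v
  have hswap (i j : Fin n) :
      secondMoment μ (single i j 1) (single j i 1) = if i = j then α else γ := by
    split_ifs with hij
    · subst hij
      simpa using secondMoment_single_perm hμ (Equiv.swap u i) u u u u
    · obtain ⟨σ, rfl, rfl⟩ := Equiv.Perm.exists_apply_eq_and_apply_eq huv hij
      exact secondMoment_single_perm hμ σ u v v u
  have h₁ : (n : ℂ) * (α + (n - 1) * β) = 1 := by
    simpa only [hdiag, Fintype.sum_sum_ite_eq, Fintype.card_fin] using
      sum_sum_secondMoment_single_diag (μ := μ)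
  have h₂ : (n : ℂ) * (α + (n - 1) * γ) = 1 := by
    simpa only [hswap, Fintype.sum_sum_ite_eq, Fintype.card_fin] using
      sum_sum_secondMoment_single_swap (μ := μ)
  have h₃ : α = β + γ := secondMoment_single_diag_eq_add hμ huv
  have hn : 2 ≤ n := Fin.nontrivial_iff_two_le.1 ⟨u, v, huv⟩
  have hn₁ : (n : ℂ) - 1 ≠ 0 := sub_ne_zero.2 (by exact_mod_cast (by omega : n ≠ 1))
  have hn₀ : (n : ℂ) ≠ 0 := by exact_mod_cast (by omega : n ≠ 0)
  have hβγ : β = γ := by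
    have : (n : ℂ) * (n - 1) * (β - γ) = 0 := by linear_combination h₁ - h₂
    simpa [hn₀, hn₁, sub_eq_zero] using this
  have hβ : β = 1 / (n * (n + 1)) := by
    field_simp
    linear_combination h₁ - n * h₃ + n * hβγ
  refine ⟨hβ, hβγ ▸ hβ, ?_⟩
  rw [h₃, ← hβγ, hβ]
  ring

lemma secondMoment_single_self (hμ : UnitarilyInvariant μ) (i : Fin n) :
    secondMoment μ (single i i 1) (single i i 1) = 2 / (n * (n + 1)) := by
  by_cases hn : 2 ≤ n
  · have := Fin.nontrivial_iff_two_le.2 hn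
    obtain ⟨v, hv⟩ := exists_ne i
    exact (secondMoment_single_of_ne hμ hv.symm).2.2
  · obtain rfl : n = 1 := by have := i.isLt; omega
    have h := sum_sum_secondMoment_single_diag (μ := μ)
    simp only [Fin.sum_univ_one] at h
    rw [Subsingleton.elim i 0, h]
    norm_num

variable (n) in
def traceMomentForm :
    Matrix (Fin n) (Fin n) ℂ →ₗ[ℂ] Matrix (Fin n) (Fin n) ℂ →ₗ[ℂ] ℂ :=
  LinearMap.mk₂ ℂ (fun X Y => ((X * Y).trace + X.trace * Y.trace) / (n * (n + 1)))
    (fun X X' Y => by simp only [Matrix.add_mul, trace_add]; ring)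
    (fun c X Y => by simp only [Matrix.smul_mul, trace_smul, smul_eq_mul]; ring)
    (fun X Y Y' => by simp only [Matrix.mul_add, trace_add]; ring)
    (fun c X Y => by simp only [Matrix.mul_smul, trace_smul, smul_eq_mul]; ring)

lemma secondMoment_single (hμ : UnitarilyInvariant μ) (i j k l : Fin n) :
    secondMoment μ (single i j 1) (single k l 1) =
      traceMomentForm n (single i j 1) (single k l 1) := by
  simp only [traceMomentForm, LinearMap.mk₂_apply, trace_single_mul, smul_eq_mul, one_mul]
  by_cases hpat : (i = j ∧ k = l) ∨ (j = k ∧ l = i)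
  · rcases hpat with ⟨rfl, rfl⟩ | ⟨rfl, rfl⟩
    · by_cases hik : i = k
      · subst hik
        rw [secondMoment_single_self hμ]
        simp only [single_apply_same, trace_single_eq_same]
        ring
      · rw [(secondMoment_single_of_ne hμ hik).1]
        simp [Ne.symm hik]
    · by_cases hlj : l = j
      · subst hlj
        rw [secondMoment_single_self hμ]
        simp only [single_apply_same, trace_single_eq_same]
        ring
      · rw [(secondMoment_single_of_ne hμ hlj).2.1]
        simp [trace_single_eq_of_ne _ _ _ hlj, trace_single_eq_of_ne _ _ _ (Ne.symm hlj)]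
  · rw [secondMoment_single_eq_zero hμ hpat]
    have hswap : single k l (1 : ℂ) j i = 0 := by
      rw [single_apply, if_neg fun h => hpat (.inr ⟨h.1.symm, h.2⟩)]
    have htrace : (single i j (1 : ℂ)).trace * (single k l 1).trace = 0 := by
      by_cases hij : i = j
      · rw [trace_single_eq_of_ne _ _ _ fun hkl => hpat (.inl ⟨hij, hkl⟩), mul_zero]
      · rw [trace_single_eq_of_ne _ _ _ hij, zero_mul]
    rw [hswap, htrace, add_zero, zero_div]

theorem secondMoment_eq_traceMomentForm (hμ : UnitarilyInvariant μ) :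
    secondMoment μ = traceMomentForm n :=
  LinearMap.ext_basis (stdBasis ℂ (Fin n) (Fin n)) (stdBasis ℂ (Fin n) (Fin n))
    fun ⟨i, j⟩ ⟨k, l⟩ => by
      simpa only [stdBasis_eq_single] using secondMoment_single hμ i j k l

end ProjSp

/-- Trace-integral formula: for any operators `A, B` on `ℂⁿ`,
`∫ conj(F_A) F_B dμₙ = (tr(A*B) + tr(A*) tr(B)) / (n(n+1))`, where `F_A(p) = tr(pA)` and
`μₙ` is the (unique) `U(n)`-invariant probability measure on projective space. -/
theorem integral_conj_frame_mul_frame (n : ℕ) (A B : Matrix (Fin n) (Fin n) ℂ)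
    (μ : Measure (ProjSp n)) [IsProbabilityMeasure μ]
    (hinv : ∀ U : Matrix.unitaryGroup (Fin n) ℂ, Measure.map (projConj U) μ = μ) :
    ∫ p : ProjSp n, (starRingEnd ℂ) ((p.1 * A).trace) * (p.1 * B).trace ∂μ =
      ((Aᴴ * B).trace + (Aᴴ).trace * B.trace) / ((n : ℂ) * ((n : ℂ) + 1)) := by
  simp only [ProjSp.conj_trace_mul]
  rw [← ProjSp.secondMoment_apply, ProjSp.secondMoment_eq_traceMomentForm hinv]
  rfl
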